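/- arXiv:2004.09054 — 4 statements merged into one kernel-verified Lean document; each statement's English description precedes it below -/
import Mathlib

section
/- Condition CCA is equivalent to the 2-reach condition: a directed graph G satisfies CCA (for every partition of V into sets L, C, R with L, R nonempty, either R has at least f+1 incoming neighbors in L ∪ C or L has at least f+1 incoming neighbors in R ∪ C) if and only if it satisfies 2-reach (for all u, v and all F_u, F_v of size at most f with u ∉ F_u, v ∉ F_v, reach_v(F_v) ∩ reach_u(F_u) ≠ ∅). -/
variable {V : Type*} [Fintype V] [DecidableEq V]

/-- One step along an edge of the subgraph induced on the complement of `F`. -/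
def AvoidStep (E : V → V → Prop) (F : Set V) (a b : V) : Prop :=
  E a b ∧ a ∉ F ∧ b ∉ F

/-- `reachSet E v F` : vertices outside `F` with a directed path to `v`
in the subgraph induced on `V \ F`. -/
def reachSet (E : V → V → Prop) (v : V) (F : Set V) : Set V :=
  {u | u ∉ F ∧ Relation.ReflTransGen (AvoidStep E F) u v}

def OneReach (E : V → V → Prop) (f : ℕ) : Prop :=
  ∀ F : Set V, F.ncard ≤ f → ∀ u v : V, u ∉ F → v ∉ F →
    (reachSet E u F ∩ reachSet E v F).Nonempty

def TwoReach (E : V → V → Prop) (f : ℕ) : Prop :=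
  ∀ (u v : V) (Fu Fv : Set V), Fu.ncard ≤ f → Fv.ncard ≤ f → u ∉ Fu → v ∉ Fv →
    (reachSet E v Fv ∩ reachSet E u Fu).Nonempty

def ThreeReach (E : V → V → Prop) (f : ℕ) : Prop :=
  ∀ (u v : V) (F Fu Fv : Set V), F.ncard ≤ f → Fu.ncard ≤ f → Fv.ncard ≤ f →
    u ∉ F ∪ Fu → v ∉ F ∪ Fv →
    (reachSet E v (F ∪ Fv) ∩ reachSet E u (F ∪ Fu)).Nonempty

/-- Incoming neighbors of a set `B` with respect to edge relation `E`. -/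
def inNbrs (E : V → V → Prop) (B : Set V) : Set V :=
  {w | w ∉ B ∧ ∃ b ∈ B, E w b}

/-- Edge relation of the reduced graph `G_{F1,F2}` : all outgoing edges of
vertices in `F1 ∪ F2` removed. -/
def redStep (E : V → V → Prop) (F1 F2 : Set V) (a b : V) : Prop :=
  E a b ∧ a ∉ F1 ∪ F2

/-- Source component of the reduced graph `G_{F1,F2}` : vertices having
directed paths in the reduced graph to every vertex of `V`. -/
def sourceComp (E : V → V → Prop) (F1 F2 : Set V) : Set V :=
  {v | ∀ w : V, Relation.ReflTransGen (redStep E F1 F2) v w}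

/-- Condition CCA for graph `(V, E)` with parameter `f`. -/
def CCA (E : V → V → Prop) (f : ℕ) : Prop :=
  ∀ L C R : Set V, L ∪ C ∪ R = Set.univ →
    Disjoint L C → Disjoint L R → Disjoint C R →
    L.Nonempty → R.Nonempty →
    f + 1 ≤ (inNbrs E R ∩ (L ∪ C)).ncard ∨ f + 1 ≤ (inNbrs E L ∩ (R ∪ C)).ncard

lemma reach_subset_aux {E : V → V → Prop} {u : V} {F L : Set V} (hu : u ∈ L)
    (hstep : ∀ a b, E a b → a ∉ F → b ∈ L → a ∈ L) :
    reachSet E u F ⊆ L := by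
  rintro x ⟨hxF, hpath⟩
  clear hxF
  induction hpath using Relation.ReflTransGen.head_induction_on with
  | refl => exact hu
  | head hab _ ih => exact hstep _ _ hab.1 hab.2.1 ih

lemma inNbrs_reach_subset {E : V → V → Prop} {u : V} {F : Set V} :
    inNbrs E (reachSet E u F) ⊆ F := by
  rintro w ⟨hw, b, hbL, hwb⟩
  by_contra hwF
  exact hw ⟨hwF, Relation.ReflTransGen.head ⟨hwb, hwF, hbL.1⟩ hbL.2⟩

theorem CCA_iff_twoReach (E : V → V → Prop) (f : ℕ) :
    CCA E f ↔ TwoReach E f := by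
  constructor
  · intro hcca u v Fu Fv hFu hFv huFu hvFv
    by_contra hne
    rw [Set.not_nonempty_iff_eq_empty] at hne
    set L := reachSet E u Fu with hL
    set R := reachSet E v Fv with hR
    set C := (L ∪ R)ᶜ with hC
    have hdisj : Disjoint L R := by
      rw [Set.disjoint_iff_inter_eq_empty, Set.inter_comm]
      exact hne
    have := hcca L C R ?_ ?_ hdisj ?_ ⟨u, huFu, Relation.ReflTransGen.refl⟩
        ⟨v, hvFv, Relation.ReflTransGen.refl⟩
    · rcases this with h | h
      · have hsub : inNbrs E R ∩ (L ∪ C) ⊆ Fv :=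
          (Set.inter_subset_left).trans inNbrs_reach_subset
        have := (Set.ncard_le_ncard hsub (Set.toFinite _)).trans hFv
        omega
      · have hsub : inNbrs E L ∩ (R ∪ C) ⊆ Fu :=
          (Set.inter_subset_left).trans inNbrs_reach_subset
        have := (Set.ncard_le_ncard hsub (Set.toFinite _)).trans hFu
        omega
    · ext x
      simp only [hC, Set.mem_union, Set.mem_compl_iff, Set.mem_univ, iff_true]
      tauto
    · rw [Set.disjoint_left]
      intro a haL haC
      exact haC (Or.inl haL)
    · rw [Set.disjoint_left]
      intro a haC haR
      exact haC (Or.inr haR)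
  · intro h2 L C R hunion hLC hLR hCR hLne hRne
    obtain ⟨u, hu⟩ := hLne
    obtain ⟨v, hv⟩ := hRne
    by_contra hcon
    push_neg at hcon
    obtain ⟨h1, h2'⟩ := hcon
    set Fv := inNbrs E R ∩ (L ∪ C) with hFv
    set Fu := inNbrs E L ∩ (R ∪ C) with hFu
    have hFvc : Fv.ncard ≤ f := by omega
    have hFuc : Fu.ncard ≤ f := by omega
    have huFu : u ∉ Fu := by
      rintro ⟨-, h⟩
      rcases h with h | h
      · exact (Set.disjoint_left.mp hLR) hu h
      · exact (Set.disjoint_left.mp hLC) hu h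
    have hvFv : v ∉ Fv := by
      rintro ⟨-, h⟩
      rcases h with h | h
      · exact (Set.disjoint_left.mp hLR) h hv
      · exact (Set.disjoint_left.mp hCR) h hv
    obtain ⟨w, hwR, hwL⟩ := h2 u v Fu Fv hFuc hFvc huFu hvFv
    have hsubL : reachSet E u Fu ⊆ L := by
      apply reach_subset_aux hu
      intro a b hab haF hbL
      by_contra haL
      apply haF
      refine ⟨⟨haL, b, hbL, hab⟩, ?_⟩
      have : a ∈ L ∪ C ∪ R := hunion ▸ Set.mem_univ a
      rcases this with (h | h) | h
      · exact absurd h haL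
      · exact Or.inr h
      · exact Or.inl h
    have hsubR : reachSet E v Fv ⊆ R := by
      apply reach_subset_aux hv
      intro a b hab haF hbR
      by_contra haR
      apply haF
      refine ⟨⟨haR, b, hbR, hab⟩, ?_⟩
      have : a ∈ L ∪ C ∪ R := hunion ▸ Set.mem_univ a
      rcases this with (h | h) | h
      · exact Or.inl h
      · exact Or.inr h
      · exact absurd h haR
    exact (Set.disjoint_left.mp hLR) (hsubL hwL) (hsubR hwR)
end

section
/- Condition BCS is equivalent to the 3-reach condition: a directed graph G satisfies BCS (for every partition of V into four sets F, L, C, R with L, R nonempty and |F| ≤ f, either R has at least f+1 incoming neighbors in L ∪ C within the subgraph induced on V \ F, or L has at least f+1 incoming neighbors in R ∪ C within that subgraph) if and only if G satisfies 3-reach (for all u, v and all F, F_u, F_v each of size at most f with u ∉ F ∪ F_u and v ∉ F ∪ F_v, reach_v(F ∪ F_v) ∩ reach_u(F ∪ F_u) ≠ ∅). -/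
variable {V : Type*} [Fintype V] [DecidableEq V]

/-- Condition BCS for graph `(V, E)` with parameter `f`: the incoming neighbors
are counted in the subgraph induced on `V \ F`, whose edge relation is
`AvoidStep E F`. -/
def BCS (E : V → V → Prop) (f : ℕ) : Prop :=
  ∀ F L C R : Set V, F ∪ L ∪ C ∪ R = Set.univ →
    Disjoint F L → Disjoint F C → Disjoint F R →
    Disjoint L C → Disjoint L R → Disjoint C R →
    F.ncard ≤ f → L.Nonempty → R.Nonempty →
    f + 1 ≤ (inNbrs (AvoidStep E F) R ∩ (L ∪ C)).ncard ∨
      f + 1 ≤ (inNbrs (AvoidStep E F) L ∩ (R ∪ C)).ncard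

theorem BCS_iff_threeReach (E : V → V → Prop) (f : ℕ) :
    BCS E f ↔ ThreeReach E f := by
  constructor
  · -- BCS → ThreeReach
    intro hbcs u v F Fu Fv hF hFu hFv hu hv
    by_contra hne
    rw [Set.not_nonempty_iff_eq_empty] at hne
    set L := reachSet E v (F ∪ Fv) with hLdef
    set R := reachSet E u (F ∪ Fu) with hRdef
    have hLR : ∀ x, x ∈ L → x ∈ R → False := by
      intro x hxL hxR
      have : x ∈ L ∩ R := ⟨hxL, hxR⟩
      rw [hne] at this; exact this
    have hLnF : ∀ x ∈ L, x ∉ F := fun x hx hxF => hx.1 (Or.inl hxF)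
    have hRnF : ∀ x ∈ R, x ∉ F := fun x hx hxF => hx.1 (Or.inl hxF)
    set C := (F ∪ L ∪ R)ᶜ with hCdef
    have huniv : F ∪ L ∪ C ∪ R = Set.univ := by
      ext x
      simp only [hCdef, Set.mem_union, Set.mem_compl_iff, Set.mem_univ, iff_true]
      tauto
    have hvL : v ∈ L := ⟨hv, Relation.ReflTransGen.refl⟩
    have huR : u ∈ R := ⟨hu, Relation.ReflTransGen.refl⟩
    have hsubR : inNbrs (AvoidStep E F) R ∩ (L ∪ C) ⊆ Fu := by
      rintro w ⟨⟨hwR, b, hbR, hE, hwF, hbF⟩, -⟩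
      by_contra hwFu
      have hwFFu : w ∉ F ∪ Fu := fun h => h.elim hwF hwFu
      exact hwR ⟨hwFFu, Relation.ReflTransGen.head ⟨hE, hwFFu, hbR.1⟩ hbR.2⟩
    have hsubL : inNbrs (AvoidStep E F) L ∩ (R ∪ C) ⊆ Fv := by
      rintro w ⟨⟨hwL, b, hbL, hE, hwF, hbF⟩, -⟩
      by_contra hwFv
      have hwFFv : w ∉ F ∪ Fv := fun h => h.elim hwF hwFv
      exact hwL ⟨hwFFv, Relation.ReflTransGen.head ⟨hE, hwFFv, hbL.1⟩ hbL.2⟩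
    have hcardR : (inNbrs (AvoidStep E F) R ∩ (L ∪ C)).ncard ≤ f :=
      le_trans (Set.ncard_le_ncard hsubR (Set.toFinite Fu)) hFu
    have hcardL : (inNbrs (AvoidStep E F) L ∩ (R ∪ C)).ncard ≤ f :=
      le_trans (Set.ncard_le_ncard hsubL (Set.toFinite Fv)) hFv
    have := hbcs F L C R huniv
      (Set.disjoint_left.mpr fun a haF haL => hLnF a haL haF)
      (Set.disjoint_left.mpr fun a haF haC => haC (Or.inl (Or.inl haF)))
      (Set.disjoint_left.mpr fun a haF haR => hRnF a haR haF)
      (Set.disjoint_left.mpr fun a haL haC => haC (Or.inl (Or.inr haL)))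
      (Set.disjoint_left.mpr fun a haL haR => hLR a haL haR)
      (Set.disjoint_left.mpr fun a haC haR => haC (Or.inr haR))
      hF ⟨v, hvL⟩ ⟨u, huR⟩
    omega
  · -- ThreeReach → BCS
    intro h3 F L C R huniv hFL hFC hFR hLC hLR hCR hF hLne hRne
    by_contra hcon
    push_neg at hcon
    obtain ⟨hc1, hc2⟩ := hcon
    set Fu := inNbrs (AvoidStep E F) R ∩ (L ∪ C) with hFudef
    set Fv := inNbrs (AvoidStep E F) L ∩ (R ∪ C) with hFvdef
    obtain ⟨u, huR⟩ := hRne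
    obtain ⟨v, hvL⟩ := hLne
    have hmem : ∀ a : V, a ∈ F ∪ L ∪ C ∪ R := fun a => huniv ▸ Set.mem_univ a
    have hu : u ∉ F ∪ Fu := by
      rintro (h | h)
      · exact Set.disjoint_right.mp hFR huR h
      · rcases h.2 with h' | h'
        · exact Set.disjoint_right.mp hLR huR h'
        · exact Set.disjoint_right.mp hCR huR h'
    have hv : v ∉ F ∪ Fv := by
      rintro (h | h)
      · exact Set.disjoint_right.mp hFL hvL h
      · rcases h.2 with h' | h'
        · exact Set.disjoint_left.mp hLR hvL h'
        · exact Set.disjoint_left.mp hLC hvL h'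
    obtain ⟨x, hxv, hxu⟩ := h3 u v F Fu Fv hF (by omega) (by omega) hu hv
    -- reachSet E u (F ∪ Fu) ⊆ R
    have hreachR : ∀ a, Relation.ReflTransGen (AvoidStep E (F ∪ Fu)) a u → a ∈ R := by
      intro a ha
      induction ha using Relation.ReflTransGen.head_induction_on with
      | refl => exact huR
      | head h' _ ih =>
        rename_i a c _
        obtain ⟨hE, haF, hcF⟩ := h'
        by_contra haR
        have haLC : a ∈ L ∪ C := by
          rcases hmem a with ((hh | hh) | hh) | hh
          · exact absurd (Or.inl hh) haF
          · exact Or.inl hh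
          · exact Or.inr hh
          · exact absurd hh haR
        exact haF (Or.inr ⟨⟨haR, c, ih, hE, fun hh => haF (Or.inl hh),
          fun hh => hcF (Or.inl hh)⟩, haLC⟩)
    have hreachL : ∀ a, Relation.ReflTransGen (AvoidStep E (F ∪ Fv)) a v → a ∈ L := by
      intro a ha
      induction ha using Relation.ReflTransGen.head_induction_on with
      | refl => exact hvL
      | head h' _ ih =>
        rename_i a c _
        obtain ⟨hE, haF, hcF⟩ := h'
        by_contra haL
        have haRC : a ∈ R ∪ C := by
          rcases hmem a with ((hh | hh) | hh) | hh
          · exact absurd (Or.inl hh) haF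
          · exact absurd hh haL
          · exact Or.inr hh
          · exact Or.inl hh
        exact haF (Or.inr ⟨⟨haL, c, ih, hE, fun hh => haF (Or.inl hh),
          fun hh => hcF (Or.inl hh)⟩, haRC⟩)
    exact Set.disjoint_left.mp hLR (hreachL x hxv.2) (hreachR x hxu.2)
end

section
/- If the 2-reach condition fails for graph G (with parameter f), then there exists a partition of V into sets L, C, R with L and R nonempty such that the set of incoming neighbors of L has size at most f, the set of incoming neighbors of R has size at most f, and for any v ∈ L and u ∈ R, reach_v(N⁻(L)) ∩ reach_u(N⁻(R)) ⊆ L ∩ R = ∅. -/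
variable {V : Type*} [Fintype V] [DecidableEq V]

lemma inNbrs_reachSet_subset (E : V → V → Prop) (v : V) (F : Set V) :
    inNbrs E (reachSet E v F) ⊆ F := by
  rintro w ⟨hw, b, hb, hE⟩
  by_contra hwF
  exact hw ⟨hwF, Relation.ReflTransGen.head ⟨hE, hwF, hb.1⟩ hb.2⟩

lemma reach_of_reach (E : V → V → Prop) (v t : V) (F : Set V)
    (ht : t ∈ reachSet E v F) :
    reachSet E t (inNbrs E (reachSet E v F)) ⊆ reachSet E v F := by
  rintro x ⟨hx, hpath⟩
  clear hx
  induction hpath using Relation.ReflTransGen.head_induction_on with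
  | refl => exact ht
  | head hab _ ih =>
    obtain ⟨hE, ha, hb⟩ := hab
    by_contra haL
    exact ha ⟨haL, _, ih, hE⟩

theorem not_twoReach_partition (E : V → V → Prop) (f : ℕ)
    (h : ¬ TwoReach E f) :
    ∃ L C R : Set V, L ∪ C ∪ R = Set.univ ∧
      Disjoint L C ∧ Disjoint L R ∧ Disjoint C R ∧
      L.Nonempty ∧ R.Nonempty ∧
      (inNbrs E L).ncard ≤ f ∧ (inNbrs E R).ncard ≤ f ∧
      (∀ v ∈ L, ∀ u ∈ R,
        reachSet E v (inNbrs E L) ∩ reachSet E u (inNbrs E R) ⊆ L ∩ R) ∧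
      L ∩ R = ∅ := by
  simp only [TwoReach, not_forall] at h
  obtain ⟨u, v, Fu, Fv, hFu, hFv, hu, hv, hne⟩ := h
  rw [Set.not_nonempty_iff_eq_empty] at hne
  refine ⟨reachSet E v Fv, (reachSet E v Fv ∪ reachSet E u Fu)ᶜ, reachSet E u Fu,
    ?_, ?_, ?_, ?_, ⟨v, hv, Relation.ReflTransGen.refl⟩,
    ⟨u, hu, Relation.ReflTransGen.refl⟩, ?_, ?_, ?_, hne⟩
  · ext x; by_cases hx : x ∈ reachSet E v Fv ∪ reachSet E u Fu <;> simp_all; tauto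
  · rw [Set.disjoint_left]; intro a ha hc; exact hc (Or.inl ha)
  · rw [Set.disjoint_iff_inter_eq_empty]; exact hne
  · rw [Set.disjoint_right]; intro a ha hc; exact hc (Or.inr ha)
  · exact le_trans (Set.ncard_le_ncard (inNbrs_reachSet_subset E v Fv)
      (Set.toFinite _)) hFv
  · exact le_trans (Set.ncard_le_ncard (inNbrs_reachSet_subset E u Fu)
      (Set.toFinite _)) hFu
  · intro a ha b hb x hx
    exact ⟨reach_of_reach E v a Fv ha hx.1, reach_of_reach E u b Fu hb hx.2⟩
end

section
/- Let two nonfaulty nodes each compute their next value as the midpoint of the max and min of a trimmed sorted vector. If the trimmed vectors O'_v and O'_u of two nodes share a common element z, and all elements of both vectors lie within [μ, U], then the new values x_v = (max(O'_v) + min(O'_v))/2 and x_u = (max(O'_u) + min(O'_u))/2 satisfy |x_v − x_u| ≤ (U − μ)/2. -/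
theorem midpoint_diff_le (μ U : ℝ) (hμU : μ ≤ U)
    (Ov Ou : Finset ℝ) (hv : Ov.Nonempty) (hu : Ou.Nonempty)
    (hvsub : ↑Ov ⊆ Set.Icc μ U) (husub : ↑Ou ⊆ Set.Icc μ U)
    (hint : (Ov ∩ Ou).Nonempty) :
    |(Ov.max' hv + Ov.min' hv) / 2 - (Ou.max' hu + Ou.min' hu) / 2| ≤
      (U - μ) / 2 := by
  obtain ⟨z, hz⟩ := hint
  rw [Finset.mem_inter] at hz
  obtain ⟨hzv, hzu⟩ := hz
  have h1 := Ov.le_max' z hzv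
  have h2 := Ov.min'_le z hzv
  have h3 := Ou.le_max' z hzu
  have h4 := Ou.min'_le z hzu
  have hmv := hvsub (Ov.max'_mem hv)
  have hnv := hvsub (Ov.min'_mem hv)
  have hmu := husub (Ou.max'_mem hu)
  have hnu := husub (Ou.min'_mem hu)
  rw [Set.mem_Icc] at hmv hnv hmu hnu
  rw [abs_le]
  constructor <;> linarith [hmv.2, hnv.1, hmu.2, hnu.1]
end
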